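/- Let f : ℝ^{n-1} → ℝ be Lipschitz with f(0) = 0 and ‖∇f‖_∞ ≤ η for some η ∈ (0, 1/15], and let G := graph(f) ∩ B₂ ⊂ ℝⁿ. Then for every δ ∈ (0,1/2) and every x ∈ (closure(B_{1+δ}) \ B₁) ∩ G, one has dist(x, (closure(B_{1+2δ}) \ B_{1+δ}) ∩ G) ≤ (3/2) δ. -/

import Mathlib

/-!
Push `x = (y, f y)` outward along the part of the graph lying over the ray through `y`:
for `x' = ((1 + τ) y, f ((1 + τ) y))` the Lipschitz bound gives
`⟪x', x⟫ ≥ ‖x‖² + τ (1 - η²) ‖y‖²`, so `‖x'‖` gains at least `τ (1 - η²) ‖y‖² / ‖x‖`, while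
`‖x' - x‖ ≤ √(1 + η²) τ ‖y‖`. Since also `‖x‖ ≤ √(1 + η²) ‖y‖`, gaining the deficit
`d = 1 + δ - ‖x‖` in norm costs a displacement of at most `(1 + η²) / (1 - η²) · d ≤ (3/2) d`,
which is also small enough to keep `x'` inside `B_{1+2δ}`.
-/

open Metric Set

/-- The graph of `f : ℝ^{n-1} → ℝ` inside `ℝⁿ = ℝ^{n-1} ×₂ ℝ` (with the Euclidean norm),
intersected with the ball `B₂`. -/
noncomputable def graphInBall2 {m : ℕ} (f : EuclideanSpace ℝ (Fin m) → ℝ) :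
    Set (WithLp 2 (EuclideanSpace ℝ (Fin m) × ℝ)) :=
  {p | ∃ y, p = (WithLp.equiv 2 (EuclideanSpace ℝ (Fin m) × ℝ)).symm (y, f y)} ∩
    ball (0 : WithLp 2 (EuclideanSpace ℝ (Fin m) × ℝ)) 2

open scoped NNReal

section LipschitzGraph

variable {E : Type*}

lemma norm_toLp_prod_sq [SeminormedAddCommGroup E] (y : E) (t : ℝ) :
    ‖WithLp.toLp 2 (y, t)‖ ^ 2 = ‖y‖ ^ 2 + t ^ 2 := by
  rw [WithLp.prod_norm_sq_eq_of_L2]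
  simp [Real.norm_eq_abs, sq_abs]

lemma LipschitzWith.norm_graph_sub_sq_le [SeminormedAddCommGroup E] {K : ℝ≥0} {f : E → ℝ}
    (hf : LipschitzWith K f) (u v : E) :
    ‖WithLp.toLp 2 (u, f u) - WithLp.toLp 2 (v, f v)‖ ^ 2 ≤ (1 + K ^ 2) * ‖u - v‖ ^ 2 := by
  have hfuv : |f u - f v| ≤ K * ‖u - v‖ := by
    simpa [Real.dist_eq, dist_eq_norm] using hf.dist_le_mul u v
  rw [← WithLp.toLp_sub, Prod.mk_sub_mk, norm_toLp_prod_sq, ← sq_abs (f u - f v)]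
  nlinarith [pow_le_pow_left₀ (abs_nonneg _) hfuv 2]

variable [NormedAddCommGroup E] [InnerProductSpace ℝ E]

lemma LipschitzWith.norm_graph_sq_add_le_inner {K : ℝ≥0} {f : E → ℝ}
    (hf : LipschitzWith K f) (hf0 : f 0 = 0) (y : E) {τ : ℝ} (hτ : 0 ≤ τ) :
    ‖WithLp.toLp 2 (y, f y)‖ ^ 2 + τ * (1 - K ^ 2) * ‖y‖ ^ 2 ≤
      inner ℝ (WithLp.toLp 2 ((1 + τ) • y, f ((1 + τ) • y))) (WithLp.toLp 2 (y, f y)) := by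
  have hfy : |f y| ≤ K * ‖y‖ := by
    simpa [Real.dist_eq, hf0] using hf.dist_le_mul y 0
  have hmove : |f ((1 + τ) • y) - f y| ≤ K * (τ * ‖y‖) := by
    have hstep : (1 + τ) • y - y = τ • y := by rw [add_smul, one_smul, add_sub_cancel_left]
    have := hf.dist_le_mul ((1 + τ) • y) y
    rwa [Real.dist_eq, dist_eq_norm, hstep, norm_smul, Real.norm_of_nonneg hτ] at this
  have hcross : |f ((1 + τ) • y) - f y| * |f y| ≤ K * (τ * ‖y‖) * (K * ‖y‖) :=
    mul_le_mul hmove hfy (abs_nonneg _) (by positivity)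
  rw [norm_toLp_prod_sq, WithLp.prod_inner_apply]
  simp only [real_inner_smul_left, real_inner_self_eq_norm_sq, RCLike.inner_apply, conj_trivial]
  nlinarith [neg_abs_le ((f ((1 + τ) • y) - f y) * f y), abs_mul (f ((1 + τ) • y) - f y) (f y)]

lemma LipschitzWith.exists_graph_norm_ge_add_dist_le {K : ℝ≥0} {f : E → ℝ}
    (hf : LipschitzWith K f) (hf0 : f 0 = 0) (hK : K < 1) {y : E} (hy : y ≠ 0) {d : ℝ}
    (hd : 0 ≤ d) :
    ∃ y' : E, ‖WithLp.toLp 2 (y, f y)‖ + d ≤ ‖WithLp.toLp 2 (y', f y')‖ ∧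
      ‖WithLp.toLp 2 (y', f y') - WithLp.toLp 2 (y, f y)‖ ≤ (1 + K ^ 2) / (1 - K ^ 2) * d := by
  set r := ‖WithLp.toLp 2 (y, f y)‖ with hr_def
  have ha : 0 < ‖y‖ := norm_pos_iff.2 hy
  have hK2 : 0 < 1 - (K : ℝ) ^ 2 := sub_pos.2 (pow_lt_one₀ K.2 hK two_ne_zero)
  have hra : r ^ 2 ≤ (1 + K ^ 2) * ‖y‖ ^ 2 := by
    have := hf.norm_graph_sub_sq_le y 0
    rwa [hf0, Prod.mk_zero_zero, WithLp.toLp_zero, sub_zero, sub_zero] at this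
  have hr : 0 < r := by
    have : ‖y‖ ^ 2 ≤ r ^ 2 := by rw [hr_def, norm_toLp_prod_sq]; nlinarith
    nlinarith [norm_nonneg (WithLp.toLp 2 (y, f y))]
  set τ := d * r / ((1 - K ^ 2) * ‖y‖ ^ 2) with hτ_def
  have hτ : τ * (1 - K ^ 2) * ‖y‖ ^ 2 = d * r := by rw [hτ_def]; field_simp
  refine ⟨(1 + τ) • y, ?_, ?_⟩
  · have hin := hf.norm_graph_sq_add_le_inner hf0 y (τ := τ) (by positivity)
    have hcs := real_inner_le_norm (WithLp.toLp 2 ((1 + τ) • y, f ((1 + τ) • y)))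
      (WithLp.toLp 2 (y, f y))
    refine le_of_mul_le_mul_right ?_ hr
    nlinarith
  · have hstep : ‖(1 + τ) • y - y‖ = τ * ‖y‖ := by
      rw [add_smul, one_smul, add_sub_cancel_left, norm_smul, Real.norm_of_nonneg (by positivity)]
    have h := hf.norm_graph_sub_sq_le ((1 + τ) • y) y
    rw [hstep] at h
    refine (pow_le_pow_iff_left₀ (norm_nonneg _) (by positivity) two_ne_zero).1 (h.trans ?_)
    have hc : 0 < (1 - K ^ 2) * ‖y‖ := by positivity
    have hτy : τ * ‖y‖ * ((1 - K ^ 2) * ‖y‖) = d * r := by rw [← hτ]; ring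
    refine le_of_mul_le_mul_right ?_ (pow_pos hc 2)
    calc (1 + K ^ 2) * (τ * ‖y‖) ^ 2 * ((1 - K ^ 2) * ‖y‖) ^ 2
        = (1 + K ^ 2) * (d ^ 2 * r ^ 2) := by rw [mul_assoc, ← mul_pow, hτy]; ring
      _ ≤ (1 + K ^ 2) * (d ^ 2 * ((1 + K ^ 2) * ‖y‖ ^ 2)) := by gcongr
      _ = ((1 + K ^ 2) / (1 - K ^ 2) * d) ^ 2 * ((1 - K ^ 2) * ‖y‖) ^ 2 := by
        field_simp

end LipschitzGraph

theorem graph_annulus_dist_bound_general {m : ℕ} (η : ℝ) (hη : η ≤ 1 / 15)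
    (f : EuclideanSpace ℝ (Fin m) → ℝ)
    (hf : LipschitzWith (Real.toNNReal η) f) (hf0 : f 0 = 0) :
    ∀ δ : ℝ, 0 < δ → δ < 1 / 2 →
      ∀ x ∈ (closedBall (0 : WithLp 2 (EuclideanSpace ℝ (Fin m) × ℝ)) (1 + δ) \ ball 0 1) ∩
          graphInBall2 f,
        Metric.infDist x
            ((closedBall (0 : WithLp 2 (EuclideanSpace ℝ (Fin m) × ℝ)) (1 + 2 * δ) \
                ball 0 (1 + δ)) ∩ graphInBall2 f)
          ≤ 3 / 2 * δ := by
  rintro δ hδ0 hδ _ ⟨⟨hx_le, hx_ge⟩, ⟨y, rfl⟩, -⟩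
  set x := WithLp.toLp 2 (y, f y)
  replace hx_le : ‖x‖ ≤ 1 + δ := mem_closedBall_zero_iff.1 hx_le
  replace hx_ge : 1 ≤ ‖x‖ := not_lt.1 (mt mem_ball_zero_iff.2 hx_ge)
  have hK : (η.toNNReal : ℝ) ≤ 1 / 15 := by
    rw [Real.coe_toNNReal']
    exact max_le hη (by norm_num)
  have hκ : (1 + η.toNNReal ^ 2) / (1 - η.toNNReal ^ 2 : ℝ) ≤ 3 / 2 := by
    rw [div_le_iff₀ (by nlinarith [η.toNNReal.2])]
    nlinarith [η.toNNReal.2]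
  have hy : y ≠ 0 := by
    rintro rfl
    norm_num [x, hf0] at hx_ge
  obtain ⟨y', hfar, hnear⟩ := hf.exists_graph_norm_ge_add_dist_le hf0
    (hK.trans_lt (by norm_num)) hy (d := 1 + δ - ‖x‖) (by linarith)
  set x' := WithLp.toLp 2 (y', f y')
  have hnear' := hnear.trans (mul_le_mul_of_nonneg_right hκ (by linarith))
  have htri := norm_le_norm_add_norm_sub' x' x
  have hx'_mem : x' ∈ (closedBall 0 (1 + 2 * δ) \ ball 0 (1 + δ)) ∩ graphInBall2 f := by
    refine ⟨⟨?_, ?_⟩, ⟨y', rfl⟩, ?_⟩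
    · rw [mem_closedBall_zero_iff]; linarith
    · rw [mem_ball_zero_iff, not_lt]; linarith
    · rw [mem_ball_zero_iff]; linarith
  calc infDist x _ ≤ dist x x' := infDist_le_dist_of_mem hx'_mem
    _ ≤ 3 / 2 * δ := by rw [dist_comm, dist_eq_norm]; linarith

/-- For a Lipschitz graph `G` with small slope `η ≤ 1/15` through the origin, every point of
`G` in the annulus `closure(B_{1+δ}) \ B₁` is within distance `(3/2)δ` of
`(closure(B_{1+2δ}) \ B_{1+δ}) ∩ G`, for every `δ ∈ (0,1/2)`. -/
theorem graph_annulus_dist_bound {m : ℕ} (η : ℝ) (hη0 : 0 < η) (hη : η ≤ 1 / 15)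
    (f : EuclideanSpace ℝ (Fin m) → ℝ)
    (hf : LipschitzWith (Real.toNNReal η) f) (hf0 : f 0 = 0) :
    ∀ δ : ℝ, 0 < δ → δ < 1 / 2 →
      ∀ x ∈ (closedBall (0 : WithLp 2 (EuclideanSpace ℝ (Fin m) × ℝ)) (1 + δ) \ ball 0 1) ∩
          graphInBall2 f,
        Metric.infDist x
            ((closedBall (0 : WithLp 2 (EuclideanSpace ℝ (Fin m) × ℝ)) (1 + 2 * δ) \
                ball 0 (1 + δ)) ∩ graphInBall2 f)
          ≤ 3 / 2 * δ :=
  graph_annulus_dist_bound_general η hη f hf hf0
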